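/- In the lattice D8 (integer vectors with even coordinate sum in ℤ^8), the vectors of norm 2 are exactly the 112 vectors ±e_i ± e_j (i < j), and any norm-2 element of the dual lattice D8* not in D8, adjoined to D8, generates a lattice isometric to E8. -/

import Mathlib

/-- The `E₈` lattice: vectors in `ℚ⁸` whose coordinates are all integers or all
half-odd-integers, with coordinate sum an even integer. -/
def E8 : Set (Fin 8 → ℚ) :=
  {v | ((∀ i, ∃ n : ℤ, v i = n) ∨ (∀ i, ∃ n : ℤ, v i = n + 1/2)) ∧
    ∃ m : ℤ, (∑ i, v i) = 2 * m}

/-- The standard inner product on `ℚ⁸`. -/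
def ip (v w : Fin 8 → ℚ) : ℚ := ∑ i, v i * w i

/-- The `D₈` lattice: integer vectors with even coordinate sum. -/
def D8 : Set (Fin 8 → ℚ) :=
  {v | (∀ i, ∃ n : ℤ, v i = n) ∧ ∃ m : ℤ, (∑ i, v i) = 2 * m}

/-!
An integral vector of norm 2 has two coordinates `±1` and all others `0`; counting these gives
`4 · C(8,2) = 112`. Pairing a vector `g` of `D₈*` with `2eᵢ` and `eᵢ - eⱼ` in `D₈` shows that
`2gᵢ ∈ ℤ` and `gᵢ - gⱼ ∈ ℤ`. An integral vector of norm 2 lies in `D₈`, so if `g ∉ D₈` has norm 2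
then every `gᵢ` lies in `ℤ + 1/2`. Such a `g` with even coordinate sum lies in `E₈ \ D₈`, and then
`E₈ = D₈ ∪ (g + D₈)` is spanned by `g` and `D₈`. If the coordinate sum is odd, negating one
coordinate (an isometry preserving `D₈`) makes it even.
-/

open Finset

section PlusMinusVectors

variable {R ι : Type*} [DecidableEq ι]

theorem smul_single_add_smul_single_apply [Semiring R] (i j k : ι) (e f : R) :
    (e • Pi.single i 1 + f • Pi.single j 1 : ι → R) k =
      (if k = i then e else 0) + (if k = j then f else 0) := by
  simp [Pi.single_apply]

theorem support_smul_single_add_smul_single [Semiring R] {i j : ι} (hij : i ≠ j) {e f : R}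
    (he : e ≠ 0) (hf : f ≠ 0) :
    Function.support (e • Pi.single i 1 + f • Pi.single j 1 : ι → R) = {i, j} := by
  ext k
  rw [Function.mem_support, smul_single_add_smul_single_apply]
  by_cases hki : k = i
  · subst hki; simp [hij, he]
  · by_cases hkj : k = j
    · subst hkj; simp [hki, hf]
    · simp [hki, hkj]

theorem smul_single_add_smul_single_inj [Semiring R] [LinearOrder ι] {i j i' j' : ι} {e f e' f' : R}
    (hij : i < j) (hij' : i' < j') (he : e ≠ 0) (hf : f ≠ 0) (he' : e' ≠ 0) (hf' : f' ≠ 0)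
    (h : (e • Pi.single i 1 + f • Pi.single j 1 : ι → R) =
      e' • Pi.single i' 1 + f' • Pi.single j' 1) :
    i = i' ∧ j = j' ∧ e = e' ∧ f = f' := by
  have hsupp := congrArg Function.support h
  rw [support_smul_single_add_smul_single hij.ne he hf,
    support_smul_single_add_smul_single hij'.ne he' hf', Set.pair_eq_pair_iff] at hsupp
  obtain ⟨rfl, rfl⟩ | ⟨rfl, rfl⟩ := hsupp
  · have hi := congrFun h i
    have hj := congrFun h j
    simp only [smul_single_add_smul_single_apply, hij.ne, hij.ne', if_true, if_false, add_zero,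
      zero_add] at hi hj
    exact ⟨rfl, rfl, hi, hj⟩
  · exact absurd (hij.trans hij') (lt_irrefl i)

theorem dotProduct_self_smul_single_add_smul_single [Fintype ι] [CommSemiring R] {i j : ι}
    (hij : i ≠ j) (e f : R) :
    (e • Pi.single i 1 + f • Pi.single j 1 : ι → R) ⬝ᵥ (e • Pi.single i 1 + f • Pi.single j 1) =
      e * e + f * f := by
  simp [dotProduct_add, hij, hij.symm]

theorem sum_smul_single_add_smul_single [Fintype ι] [Semiring R] (i j : ι) (e f : R) :
    ∑ k, (e • Pi.single i 1 + f • Pi.single j 1 : ι → R) k = e + f := by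
  simp [Finset.sum_add_distrib, Pi.single_apply]

end PlusMinusVectors

theorem eq_zero_or_eq_one_or_eq_neg_one_of_mul_self_le_two {x : ℚ} (hx : ∃ n : ℤ, x = n)
    (h : x * x ≤ 2) : x = 0 ∨ x = 1 ∨ x = -1 := by
  obtain ⟨n, rfl⟩ := hx
  have hn : n * n ≤ 2 := by exact_mod_cast h
  have : -1 ≤ n := by nlinarith
  have : n ≤ 1 := by nlinarith
  interval_cases n <;> norm_num

theorem exists_eq_smul_single_add_smul_single {ι : Type*} [Fintype ι] [LinearOrder ι]
    (v : ι → ℚ) (hint : ∀ k, ∃ n : ℤ, v k = n) (hv : v ⬝ᵥ v = 2) :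
    ∃ i j, i < j ∧ (v i = 1 ∨ v i = -1) ∧ (v j = 1 ∨ v j = -1) ∧
      v = v i • Pi.single i 1 + v j • Pi.single j 1 := by
  have hunit : ∀ k, v k = 0 ∨ v k = 1 ∨ v k = -1 := fun k =>
    eq_zero_or_eq_one_or_eq_neg_one_of_mul_self_le_two (hint k)
      (hv ▸ single_le_sum (fun k _ => mul_self_nonneg (v k)) (mem_univ k))
  have hunit' : ∀ k, v k ≠ 0 → (v k = 1 ∨ v k = -1) := fun k hk => (hunit k).resolve_left hk
  set s := univ.filter fun k => v k ≠ 0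
  have hs : s.card = 2 := by
    have : (2 : ℚ) = ∑ k ∈ s, 1 := by
      rw [← hv, dotProduct, ← sum_filter_of_ne fun k _ hk => left_ne_zero_of_mul hk]
      refine sum_congr rfl fun k hk => ?_
      rcases hunit' k (mem_filter.mp hk).2 with h | h <;> simp [h]
    exact_mod_cast (this.trans (cast_card s).symm).symm
  have hv_sum : v = ∑ k ∈ s, v k • Pi.single k 1 := by
    rw [sum_filter_of_ne fun k _ hk => left_ne_zero_of_smul hk]
    simpa [← Pi.single_smul'] using (univ_sum_single v).symm
  obtain ⟨a, b, hab, hsab⟩ := card_eq_two.mp hs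
  have hnz : ∀ k ∈ ({a, b} : Finset ι), v k ≠ 0 := fun k hk => by
    rw [← hsab] at hk
    exact (mem_filter.mp hk).2
  have ha := hnz a (by simp)
  have hb := hnz b (by simp)
  rw [hsab, sum_pair hab] at hv_sum
  rcases hab.lt_or_gt with h | h
  · exact ⟨a, b, h, hunit' a ha, hunit' b hb, hv_sum⟩
  · exact ⟨b, a, h, hunit' b hb, hunit' a ha, hv_sum.trans (add_comm _ _)⟩

theorem ip_eq_dotProduct (v w : Fin 8 → ℚ) : ip v w = v ⬝ᵥ w := rfl

theorem smul_single_add_smul_single_mem_D8 {i j : Fin 8} {e f : ℚ}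
    (he : e = 1 ∨ e = -1) (hf : f = 1 ∨ f = -1) :
    (e • Pi.single i 1 + f • Pi.single j 1 : Fin 8 → ℚ) ∈ D8 := by
  have hint : ∀ x : ℚ, x = 1 ∨ x = -1 → ∃ n : ℤ, x = n := by
    rintro x (rfl | rfl)
    exacts [⟨1, by norm_num⟩, ⟨-1, by norm_num⟩]
  obtain ⟨a, rfl⟩ := hint e he
  obtain ⟨b, rfl⟩ := hint f hf
  refine ⟨fun k => ?_, ?_⟩
  · refine ⟨(if k = i then a else 0) + (if k = j then b else 0), ?_⟩
    rw [smul_single_add_smul_single_apply]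
    push_cast [apply_ite (Int.cast : ℤ → ℚ)]
    rfl
  · rw [sum_smul_single_add_smul_single]
    rcases he with he | he <;> rcases hf with hf | hf <;> rw [he, hf]
    exacts [⟨1, by norm_num⟩, ⟨0, by norm_num⟩, ⟨0, by norm_num⟩, ⟨-1, by norm_num⟩]

theorem D8_norm_two_eq :
    {v : Fin 8 → ℚ | v ∈ D8 ∧ ip v v = 2} =
      {v : Fin 8 → ℚ | ∃ i j : Fin 8, i < j ∧ ∃ e f : ℚ,
        (e = 1 ∨ e = -1) ∧ (f = 1 ∨ f = -1) ∧
        v = e • (Pi.single i 1 : Fin 8 → ℚ) + f • (Pi.single j 1 : Fin 8 → ℚ)} := by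
  ext v
  constructor
  · rintro ⟨⟨hint, -⟩, hv⟩
    obtain ⟨i, j, hij, hi, hj, hv⟩ := exists_eq_smul_single_add_smul_single v hint hv
    exact ⟨i, j, hij, v i, v j, hi, hj, hv⟩
  · rintro ⟨i, j, hij, e, f, he, hf, rfl⟩
    refine ⟨smul_single_add_smul_single_mem_D8 he hf, ?_⟩
    rw [ip_eq_dotProduct, dotProduct_self_smul_single_add_smul_single hij.ne]
    rcases he with rfl | rfl <;> rcases hf with rfl | rfl <;> norm_num

theorem mem_D8_of_ip_self_eq_two {v : Fin 8 → ℚ} (hint : ∀ k, ∃ n : ℤ, v k = n)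
    (hv : ip v v = 2) : v ∈ D8 := by
  obtain ⟨i, j, -, hi, hj, hv⟩ := exists_eq_smul_single_add_smul_single v hint hv
  exact hv ▸ smul_single_add_smul_single_mem_D8 hi hj

theorem ncard_D8_norm_two : {v : Fin 8 → ℚ | v ∈ D8 ∧ ip v v = 2}.ncard = 112 := by
  let pairs : Finset (Fin 8 × Fin 8) := univ.filter fun p => p.1 < p.2
  let signs : Finset ℚ := {1, -1}
  let F : (Fin 8 × Fin 8) × ℚ × ℚ → Fin 8 → ℚ := fun q =>
    q.2.1 • Pi.single q.1.1 1 + q.2.2 • Pi.single q.1.2 1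
  have hset : {v : Fin 8 → ℚ | v ∈ D8 ∧ ip v v = 2} = F '' ↑(pairs ×ˢ signs ×ˢ signs) := by
    rw [D8_norm_two_eq]
    ext v
    simp only [Set.mem_ofPred_eq, Set.mem_image, coe_product, Set.mem_prod, mem_coe, pairs, signs,
      F, mem_filter, mem_univ, true_and, mem_insert, mem_singleton, Prod.exists]
    constructor
    · rintro ⟨i, j, hij, e, f, he, hf, rfl⟩
      exact ⟨i, j, e, f, ⟨hij, he, hf⟩, rfl⟩
    · rintro ⟨i, j, e, f, ⟨hij, he, hf⟩, rfl⟩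
      exact ⟨i, j, hij, e, f, he, hf, rfl⟩
  have hinj : Set.InjOn F ↑(pairs ×ˢ signs ×ˢ signs) := by
    rintro ⟨⟨i, j⟩, e, f⟩ hq ⟨⟨i', j'⟩, e', f'⟩ hq' h
    have hne : ∀ x ∈ signs, x ≠ 0 := by simp [signs]
    simp only [coe_product, Set.mem_prod, mem_coe, pairs, mem_filter, mem_univ, true_and] at hq hq'
    obtain ⟨rfl, rfl, rfl, rfl⟩ := smul_single_add_smul_single_inj hq.1 hq'.1
      (hne e hq.2.1) (hne f hq.2.2) (hne e' hq'.2.1) (hne f' hq'.2.2) h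
    rfl
  rw [hset, hinj.ncard_image, Set.ncard_coe_finset, card_product, card_product,
    card_pair (by norm_num)]
  rfl

section NegCoord

variable {R ι : Type*} [DecidableEq ι]

def negCoord [Ring R] (i : ι) : (ι → R) ≃ₗ[R] (ι → R) :=
  LinearEquiv.piCongrRight fun k => if k = i then LinearEquiv.neg R else LinearEquiv.refl R R

theorem negCoord_apply [Ring R] (i : ι) (x : ι → R) (k : ι) :
    negCoord i x k = if k = i then -x k else x k := by
  by_cases hk : k = i <;> simp [negCoord, hk]

theorem negCoord_negCoord [Ring R] (i : ι) (x : ι → R) : negCoord i (negCoord i x) = x := by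
  ext k
  by_cases hk : k = i <;> simp [negCoord_apply, hk]

theorem dotProduct_negCoord [Fintype ι] [CommRing R] (i : ι) (x y : ι → R) :
    negCoord i x ⬝ᵥ negCoord i y = x ⬝ᵥ y := by
  refine sum_congr rfl fun k _ => ?_
  by_cases hk : k = i <;> simp [negCoord_apply, hk]

theorem sum_negCoord [Fintype ι] [Ring R] (i : ι) (x : ι → R) :
    ∑ k, negCoord i x k = ∑ k, x k - 2 * x i := by
  have : ∀ k, negCoord i x k = x k - (Pi.single i (2 * x i) : ι → R) k := fun k => by
    by_cases hk : k = i
    · simp [negCoord_apply, hk, two_mul]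
    · simp [negCoord_apply, hk]
  simp [this, sum_sub_distrib]

end NegCoord

theorem negCoord_mem_D8 {x : Fin 8 → ℚ} (i : Fin 8) (hx : x ∈ D8) : negCoord i x ∈ D8 := by
  obtain ⟨hint, m, hm⟩ := hx
  refine ⟨fun k => ?_, ?_⟩
  · obtain ⟨n, hn⟩ := hint k
    rw [negCoord_apply]
    split_ifs
    exacts [⟨-n, by rw [hn]; push_cast; ring⟩, ⟨n, hn⟩]
  · obtain ⟨n, hn⟩ := hint i
    exact ⟨m - n, by rw [sum_negCoord, hm, hn]; push_cast; ring⟩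

theorem negCoord_mem_D8_iff {x : Fin 8 → ℚ} (i : Fin 8) : negCoord i x ∈ D8 ↔ x ∈ D8 :=
  ⟨fun hx => negCoord_negCoord i x ▸ negCoord_mem_D8 i hx, negCoord_mem_D8 i⟩

theorem negCoord_image_D8 (i : Fin 8) : negCoord i '' D8 = D8 := by
  ext x
  refine ⟨?_, fun hx => ⟨negCoord i x, negCoord_mem_D8 i hx, negCoord_negCoord i x⟩⟩
  rintro ⟨y, hy, rfl⟩
  exact negCoord_mem_D8 i hy

theorem halfOdd_of_mem_dual_D8 {g : Fin 8 → ℚ} (hdual : ∀ x ∈ D8, ∃ n : ℤ, ip g x = n)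
    (hg : g ∉ D8) (hnorm : ip g g = 2) : ∀ i, ∃ n : ℤ, g i = n + 1/2 := by
  have hpair : ∀ i j : Fin 8, ∀ f : ℚ, (f = 1 ∨ f = -1) → ∃ n : ℤ, g i + f * g j = n := by
    intro i j f hf
    obtain ⟨n, hn⟩ := hdual _ (smul_single_add_smul_single_mem_D8 (i := i) (j := j) (Or.inl rfl) hf)
    refine ⟨n, ?_⟩
    rw [← hn, ip_eq_dotProduct, dotProduct_add, dotProduct_smul, dotProduct_smul,
      dotProduct_single, dotProduct_single]
    simp [mul_comm]
  have hnotint : ∀ i, ¬ ∃ n : ℤ, g i = n := by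
    rintro i ⟨n, hn⟩
    refine hg (mem_D8_of_ip_self_eq_two (fun j => ?_) hnorm)
    obtain ⟨m, hm⟩ := hpair j i (-1) (Or.inr rfl)
    exact ⟨m + n, by push_cast; linarith⟩
  intro i
  obtain ⟨a, ha⟩ := hpair i i 1 (Or.inl rfl)
  obtain ⟨k, rfl | rfl⟩ := Int.even_or_odd' a
  · exact absurd ⟨k, by push_cast at ha; linarith⟩ (hnotint i)
  · exact ⟨k, by push_cast at ha; linarith⟩

theorem int_or_halfOdd_iff {ι : Type*} (v : ι → ℚ) :
    ((∀ i, ∃ n : ℤ, v i = n) ∨ (∀ i, ∃ n : ℤ, v i = n + 1/2)) ↔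
      ∃ t : ℤ, ∀ i, ∃ n : ℤ, v i = n + t / 2 := by
  constructor
  · rintro (h | h)
    · exact ⟨0, fun i => by simpa using h i⟩
    · exact ⟨1, fun i => by simpa using h i⟩
  · rintro ⟨t, ht⟩
    obtain ⟨s, rfl | rfl⟩ := Int.even_or_odd' t
    · refine Or.inl fun i => ?_
      obtain ⟨n, hn⟩ := ht i
      exact ⟨n + s, by rw [hn]; push_cast; ring⟩
    · refine Or.inr fun i => ?_
      obtain ⟨n, hn⟩ := ht i
      exact ⟨n + s, by rw [hn]; push_cast; ring⟩

def E8AddSubgroup : AddSubgroup (Fin 8 → ℚ) where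
  carrier := E8
  zero_mem' := ⟨Or.inl fun _ => ⟨0, by simp⟩, 0, by simp⟩
  add_mem' := by
    rintro v w ⟨hv, a, ha⟩ ⟨hw, b, hb⟩
    obtain ⟨s, hs⟩ := (int_or_halfOdd_iff v).mp hv
    obtain ⟨t, ht⟩ := (int_or_halfOdd_iff w).mp hw
    refine ⟨(int_or_halfOdd_iff _).mpr ⟨s + t, fun i => ?_⟩, a + b,
      by simp [sum_add_distrib, ha, hb, mul_add]⟩
    obtain ⟨m, hm⟩ := hs i
    obtain ⟨n, hn⟩ := ht i
    exact ⟨m + n, by rw [Pi.add_apply, hm, hn]; push_cast; ring⟩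
  neg_mem' := by
    rintro v ⟨hv, a, ha⟩
    obtain ⟨s, hs⟩ := (int_or_halfOdd_iff v).mp hv
    refine ⟨(int_or_halfOdd_iff _).mpr ⟨-s, fun i => ?_⟩, -a, by simp [ha]⟩
    obtain ⟨m, hm⟩ := hs i
    exact ⟨-m, by rw [Pi.neg_apply, hm]; push_cast; ring⟩

theorem mem_D8_iff_mem_E8 {v : Fin 8 → ℚ} (hint : ∀ i, ∃ n : ℤ, v i = n) : v ∈ D8 ↔ v ∈ E8 :=
  ⟨fun hv => ⟨Or.inl hint, hv.2⟩, fun hv => ⟨hint, hv.2⟩⟩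

theorem span_insert_D8_eq_E8 {g : Fin 8 → ℚ} (hg : g ∈ E8) (hgD : g ∉ D8) :
    (Submodule.span ℤ (insert g D8) : Set (Fin 8 → ℚ)) = E8 := by
  have hgHalf : ∀ i, ∃ n : ℤ, g i = n + 1/2 :=
    hg.1.resolve_left fun hint => hgD ((mem_D8_iff_mem_E8 hint).mpr hg)
  apply subset_antisymm
  · change _ ≤ E8AddSubgroup.toIntSubmodule
    rw [Submodule.span_le]
    rintro x (rfl | hx)
    exacts [hg, ⟨Or.inl hx.1, hx.2⟩]
  · rintro v hv
    rcases hv.1 with hint | hvHalf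
    · exact Submodule.subset_span (Set.mem_insert_of_mem _ ((mem_D8_iff_mem_E8 hint).mpr hv))
    · have hdiff : v - g ∈ D8 := by
        refine (mem_D8_iff_mem_E8 fun i => ?_).mpr (E8AddSubgroup.sub_mem hv hg)
        obtain ⟨m, hm⟩ := hvHalf i
        obtain ⟨n, hn⟩ := hgHalf i
        exact ⟨m - n, by rw [Pi.sub_apply, hm, hn]; push_cast; ring⟩
      rw [← add_sub_cancel g v]
      exact Submodule.add_mem _ (Submodule.subset_span (Set.mem_insert _ _))
        (Submodule.subset_span (Set.mem_insert_of_mem _ hdiff))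

theorem mem_E8_or_negCoord_mem_E8 {g : Fin 8 → ℚ} (hg : ∀ i, ∃ n : ℤ, g i = n + 1/2) :
    g ∈ E8 ∨ negCoord 0 g ∈ E8 := by
  choose n hn using hg
  have hsum : ∑ i, g i = ∑ i, n i + 4 := by simp [hn, sum_add_distrib]; norm_num
  obtain ⟨m, hm | hm⟩ := Int.even_or_odd' (∑ i, n i)
  · refine Or.inl ⟨Or.inr fun i => ⟨n i, hn i⟩, m + 2, ?_⟩
    rw [hsum]
    exact_mod_cast by omega
  · refine Or.inr ⟨Or.inr fun i => ?_, m + 2 - n 0, ?_⟩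
    · rw [negCoord_apply]
      split_ifs
      exacts [⟨-n i - 1, by rw [hn]; push_cast; ring⟩, ⟨n i, hn i⟩]
    · rw [sum_negCoord, hsum, hn 0]
      push_cast [hm]
      ring

theorem LinearEquiv.image_span_int {M N : Type*} [AddCommGroup M] [Module ℚ M] [AddCommGroup N]
    [Module ℚ N] (φ : M ≃ₗ[ℚ] N) (s : Set M) :
    φ '' (Submodule.span ℤ s : Set M) = Submodule.span ℤ (φ '' s) :=
  congrArg SetLike.coe (Submodule.span_image (φ.toLinearMap.restrictScalars ℤ)).symm

/-- In `D₈` the norm-2 vectors are exactly the 112 vectors `±eᵢ ± eⱼ` (`i < j`), and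
adjoining to `D₈` any norm-2 element of the dual lattice `D₈*` not lying in `D₈`
generates a lattice isometric to `E₈`. -/
theorem stmt17 :
    ({v : Fin 8 → ℚ | v ∈ D8 ∧ ip v v = 2} =
      {v : Fin 8 → ℚ | ∃ i j : Fin 8, i < j ∧ ∃ e f : ℚ,
        (e = 1 ∨ e = -1) ∧ (f = 1 ∨ f = -1) ∧
        v = e • (Pi.single i 1 : Fin 8 → ℚ) + f • (Pi.single j 1 : Fin 8 → ℚ)} ∧
      {v : Fin 8 → ℚ | v ∈ D8 ∧ ip v v = 2}.ncard = 112) ∧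
    ∀ g : Fin 8 → ℚ, (∀ x ∈ D8, ∃ n : ℤ, ip g x = n) → g ∉ D8 → ip g g = 2 →
      ∃ φ : (Fin 8 → ℚ) ≃ₗ[ℚ] (Fin 8 → ℚ),
        (∀ x y, ip (φ x) (φ y) = ip x y) ∧
        φ '' (Submodule.span ℤ (insert g D8) : Set (Fin 8 → ℚ)) = E8 := by
  refine ⟨⟨D8_norm_two_eq, ncard_D8_norm_two⟩, fun g hdual hg hnorm => ?_⟩
  rcases mem_E8_or_negCoord_mem_E8 (halfOdd_of_mem_dual_D8 hdual hg hnorm) with hE | hE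
  · exact ⟨LinearEquiv.refl ℚ _, fun _ _ => rfl, 
      (Set.image_id _).trans (span_insert_D8_eq_E8 hE hg)⟩
  · refine ⟨negCoord 0, dotProduct_negCoord 0, ?_⟩
    rw [LinearEquiv.image_span_int, Set.image_insert_eq, negCoord_image_D8]
    exact span_insert_D8_eq_E8 hE ((negCoord_mem_D8_iff 0).not.mpr hg)
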